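/- arXiv:2203.15740 — 2 statements merged into one kernel-verified Lean document; each statement's English description precedes it below -/
import Mathlib

section
/- Let θ₁, θ₂ ∈ (0,1] and let K be a CZX kernel on ℝ² with constant C_K. Then there is a constant C, depending only on C_K, θ₁ and θ₂, such that for every axes-parallel square J ⊂ ℝ² with centre c_J and every x ∈ J, the Hörmander integral condition ∫_{(3J)^c} |K(x,y) − K(c_J,y)| dy ≤ C holds. -/
open MeasureTheory Real Set Filter
open scoped ENNReal NNReal

noncomputable section

/-- The decay factor `D_θ(x,y)` appearing in the definition of CZX kernels. -/
def Dfac (θ : ℝ) (x y : ℝ × ℝ) : ℝ :=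
  (|x.1 - y.1| / |x.2 - y.2| + |x.2 - y.2| / |x.1 - y.1|) ^ (-θ)

/-- A CZX kernel on `ℝ²` with Hölder exponent `θ₁`, decay exponent `θ₂` and constant `C`. -/
structure IsCZXKernel (θ₁ θ₂ C : ℝ) (K : ℝ × ℝ → ℝ × ℝ → ℂ) : Prop where
  meas : Measurable fun p : (ℝ × ℝ) × (ℝ × ℝ) => K p.1 p.2
  size : ∀ x y : ℝ × ℝ, x.1 ≠ y.1 → x.2 ≠ y.2 →
    ‖K x y‖ ≤ C * (1 / |x.1 - y.1|) * (1 / |x.2 - y.2|) * Dfac θ₂ x y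
  holder_x1 : ∀ x y : ℝ × ℝ, ∀ w : ℝ, x.1 ≠ y.1 → x.2 ≠ y.2 → |x.1 - w| ≤ |x.1 - y.1| / 2 →
    ‖K x y - K (w, x.2) y‖ ≤
      C * (|x.1 - w| ^ θ₁ / |x.1 - y.1| ^ (1 + θ₁)) * (1 / |x.2 - y.2|) * Dfac θ₂ x y
  holder_x2 : ∀ x y : ℝ × ℝ, ∀ w : ℝ, x.1 ≠ y.1 → x.2 ≠ y.2 → |x.2 - w| ≤ |x.2 - y.2| / 2 →
    ‖K x y - K (x.1, w) y‖ ≤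
      C * (1 / |x.1 - y.1|) * (|x.2 - w| ^ θ₁ / |x.2 - y.2| ^ (1 + θ₁)) * Dfac θ₂ x y
  holder_y1 : ∀ x y : ℝ × ℝ, ∀ w : ℝ, x.1 ≠ y.1 → x.2 ≠ y.2 → |y.1 - w| ≤ |x.1 - y.1| / 2 →
    ‖K x y - K x (w, y.2)‖ ≤
      C * (|y.1 - w| ^ θ₁ / |x.1 - y.1| ^ (1 + θ₁)) * (1 / |x.2 - y.2|) * Dfac θ₂ x y
  holder_y2 : ∀ x y : ℝ × ℝ, ∀ w : ℝ, x.1 ≠ y.1 → x.2 ≠ y.2 → |y.2 - w| ≤ |x.2 - y.2| / 2 →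
    ‖K x y - K x (y.1, w)‖ ≤
      C * (1 / |x.1 - y.1|) * (|y.2 - w| ^ θ₁ / |x.2 - y.2| ^ (1 + θ₁)) * Dfac θ₂ x y

/-- The axes-parallel square with centre `c` and side length `ℓ`. -/
def sqr (c : ℝ × ℝ) (ℓ : ℝ) : Set (ℝ × ℝ) :=
  Icc (c.1 - ℓ / 2) (c.1 + ℓ / 2) ×ˢ Icc (c.2 - ℓ / 2) (c.2 + ℓ / 2)

/-!
Cover `(3J)ᶜ` by the two strips where `y¹`, resp. `y²`, is at distance more than `3ℓ/2` from
`c`. Exchanging the coordinates of both variables preserves the CZX conditions and `D_{θ₂}`, so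
it suffices to treat the first strip. There one passes from `x` to `c` through `(c¹, x²)`. The
step in the first coordinate is controlled by the Hölder condition in `x¹`; the step in the
second by the Hölder condition in `x²` where `y²` is also far from `c²`, and by the size
condition where it is not. In every case the decay factor is traded for a power,
`(s/t + t/s)^{-θ} ≤ (t/s)^θ`, which leaves products of one-variable powers of `|x¹ - y¹|`
and `|x² - y²|`; the one subtle integral, `∫ (s/t + t/s)^{-θ} t⁻¹ dt ≤ 4/θ`, is split at
`t = s`.
-/

theorem lintegral_comp_abs_sub (f : ℝ → ℝ≥0∞) (p : ℝ) :
    ∫⁻ u, f |p - u| = 2 * ∫⁻ t in Ioi 0, f t := by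
  have hneg : ∫⁻ u in Iio 0, f |u| = ∫⁻ u in Ioi 0, f |u| := by
    rw [← lintegral_indicator measurableSet_Iio, ← lintegral_indicator measurableSet_Ioi,
      ← lintegral_neg_eq_self]
    congr 1 with u
    simp only [indicator_apply, mem_Iio, mem_Ioi, neg_lt_zero, abs_neg]
  have hpos : ∫⁻ u in Ioi 0, f |u| = ∫⁻ t in Ioi 0, f t :=
    setLIntegral_congr_fun measurableSet_Ioi fun u hu => by rw [abs_of_pos hu]
  rw [lintegral_sub_left_eq_self (fun u => f |u|) p,
    ← lintegral_add_compl _ measurableSet_Iio, compl_Iio,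
    ← Measure.restrict_congr_set Ioi_ae_eq_Ici, hneg, hpos, two_mul]

theorem lintegral_far_rpow (p : ℝ) {r θ : ℝ} (hr : 0 < r) (hθ : 0 < θ) :
    ∫⁻ u in {u | r ≤ |p - u|}, ENNReal.ofReal (|p - u| ^ (-(1 + θ)))
      = ENNReal.ofReal (2 / θ * r ^ (-θ)) := by
  have hIoi : ∫⁻ t in Ioi r, ENNReal.ofReal (t ^ (-(1 + θ))) = ENNReal.ofReal (r ^ (-θ) / θ) := by
    rw [← ofReal_integral_eq_lintegral_ofReal (integrableOn_Ioi_rpow_of_lt (by linarith) hr)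
      (ae_restrict_of_forall_mem measurableSet_Ioi fun t ht => rpow_nonneg (hr.trans ht).le _),
      integral_Ioi_rpow_of_lt (by linarith) hr]
    congr 1
    rw [show -(1 + θ) + 1 = -θ by ring, div_neg, neg_div, neg_neg]
  rw [← lintegral_indicator (measurableSet_le measurable_const (by fun_prop))]
  change ∫⁻ u, (Ici r).indicator (fun t => ENNReal.ofReal (t ^ (-(1 + θ)))) |p - u| = _
  rw [lintegral_comp_abs_sub, lintegral_indicator measurableSet_Ici,
    Measure.restrict_restrict measurableSet_Ici, inter_eq_left.2 (Ici_subset_Ioi.2 hr),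
    ← Measure.restrict_congr_set Ioi_ae_eq_Ici, hIoi, ← ENNReal.ofReal_ofNat 2,
    ← ENNReal.ofReal_mul zero_le_two]
  ring_nf

theorem lintegral_near_rpow (p : ℝ) {r θ : ℝ} (hr : 0 < r) (hθ : 0 < θ) :
    ∫⁻ u in {u | |p - u| ≤ r}, ENNReal.ofReal (|p - u| ^ (θ - 1))
      = ENNReal.ofReal (2 / θ * r ^ θ) := by
  have hIoc : ∫⁻ t in Ioc 0 r, ENNReal.ofReal (t ^ (θ - 1)) = ENNReal.ofReal (r ^ θ / θ) := by
    rw [← ofReal_integral_eq_lintegral_ofReal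
      ((intervalIntegrable_iff_integrableOn_Ioc_of_le hr.le).1
        (intervalIntegral.intervalIntegrable_rpow' (by linarith)))
      (ae_restrict_of_forall_mem measurableSet_Ioc fun t ht => rpow_nonneg ht.1.le _),
      ← intervalIntegral.integral_of_le hr.le, integral_rpow (Or.inl (by linarith)),
      sub_add_cancel, zero_rpow hθ.ne', sub_zero]
  rw [← lintegral_indicator (measurableSet_le (by fun_prop) measurable_const)]
  change ∫⁻ u, (Iic r).indicator (fun t => ENNReal.ofReal (t ^ (θ - 1))) |p - u| = _
  rw [lintegral_comp_abs_sub, lintegral_indicator measurableSet_Iic,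
    Measure.restrict_restrict measurableSet_Iic, Iic_inter_Ioi, hIoc, ← ENNReal.ofReal_ofNat 2,
    ← ENNReal.ofReal_mul zero_le_two]
  ring_nf

theorem add_div_rpow_neg_le {s t θ : ℝ} (hs : 0 < s) (ht : 0 < t) (hθ : 0 ≤ θ) :
    (s / t + t / s) ^ (-θ) ≤ (t / s) ^ θ := by
  calc (s / t + t / s) ^ (-θ) ≤ (s / t) ^ (-θ) :=
        rpow_le_rpow_of_nonpos (by positivity) (le_add_of_nonneg_right (by positivity))
          (neg_nonpos.2 hθ)
    _ = (t / s) ^ θ := by rw [rpow_neg (by positivity), ← inv_rpow (by positivity), inv_div]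

theorem add_div_rpow_neg_mul_inv_le {s t θ : ℝ} (hs : 0 < s) (ht : 0 < t) (hθ : 0 ≤ θ) :
    (s / t + t / s) ^ (-θ) * t⁻¹ ≤ s ^ (-θ) * t ^ (θ - 1) := by
  calc (s / t + t / s) ^ (-θ) * t⁻¹ ≤ (t / s) ^ θ * t⁻¹ := by
        gcongr; exact add_div_rpow_neg_le hs ht hθ
    _ = s ^ (-θ) * t ^ (θ - 1) := by
        rw [div_rpow ht.le hs.le, rpow_neg hs.le, rpow_sub_one ht.ne']; ring

theorem lintegral_add_div_rpow_neg_mul_inv_le (q : ℝ) {s θ : ℝ} (hs : 0 < s) (hθ : 0 < θ) :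
    ∫⁻ v, ENNReal.ofReal ((s / |q - v| + |q - v| / s) ^ (-θ) * |q - v|⁻¹)
      ≤ ENNReal.ofReal (4 / θ) := by
  set g := fun v => ENNReal.ofReal ((s / |q - v| + |q - v| / s) ^ (-θ) * |q - v|⁻¹)
  have hnear : ∀ v, g v ≤ ENNReal.ofReal (s ^ (-θ)) * ENNReal.ofReal (|q - v| ^ (θ - 1)) := by
    intro v
    rw [← ENNReal.ofReal_mul (by positivity)]
    rcases (abs_nonneg (q - v)).eq_or_lt with h | h
    · simp [g, ← h]
    · exact ENNReal.ofReal_le_ofReal (add_div_rpow_neg_mul_inv_le hs h hθ.le)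
  have hfar : ∀ v, g v ≤ ENNReal.ofReal (s ^ θ) * ENNReal.ofReal (|q - v| ^ (-(1 + θ))) := by
    intro v
    rw [← ENNReal.ofReal_mul (by positivity)]
    rcases (abs_nonneg (q - v)).eq_or_lt with h | h
    · simp [g, ← h]
    refine ENNReal.ofReal_le_ofReal ?_
    calc (s / |q - v| + |q - v| / s) ^ (-θ) * |q - v|⁻¹
        ≤ (s / |q - v|) ^ θ * |q - v|⁻¹ := by
          gcongr; rw [add_comm]; exact add_div_rpow_neg_le h hs hθ.le
      _ = s ^ θ * |q - v| ^ (-(1 + θ)) := by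
          rw [div_rpow hs.le h.le, show -(1 + θ) = -θ - 1 by ring, rpow_sub_one h.ne',
            rpow_neg h.le]
          ring
  have hmeas : MeasurableSet {v | |q - v| ≤ s} := measurableSet_le (by fun_prop) measurable_const
  have hcompl : {v | |q - v| ≤ s}ᶜ ⊆ {v | s ≤ |q - v|} := by
    intro v hv
    simp only [mem_compl_iff, mem_ofPred_eq, not_le] at hv ⊢
    exact hv.le
  calc ∫⁻ v, g v = (∫⁻ v in {v | |q - v| ≤ s}, g v) + ∫⁻ v in {v | |q - v| ≤ s}ᶜ, g v :=
        (lintegral_add_compl g hmeas).symm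
    _ ≤ (∫⁻ v in {v | |q - v| ≤ s}, ENNReal.ofReal (s ^ (-θ)) * ENNReal.ofReal (|q - v| ^ (θ - 1)))
        + ∫⁻ v in {v | s ≤ |q - v|},
          ENNReal.ofReal (s ^ θ) * ENNReal.ofReal (|q - v| ^ (-(1 + θ))) :=
        add_le_add (lintegral_mono hnear) ((lintegral_mono_set hcompl).trans' (lintegral_mono hfar))
    _ = ENNReal.ofReal (4 / θ) := by
        rw [lintegral_const_mul' _ _ ENNReal.ofReal_ne_top,
          lintegral_const_mul' _ _ ENNReal.ofReal_ne_top, lintegral_near_rpow q hs hθ,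
          lintegral_far_rpow q hs hθ, ← ENNReal.ofReal_mul (by positivity),
          ← ENNReal.ofReal_mul (by positivity),
          ← ENNReal.ofReal_add (by positivity) (by positivity)]
        congr 1
        rw [rpow_neg hs.le]
        field_simp
        ring

theorem setLIntegral_comp_swap {α β : Type*} [MeasurableSpace α] [MeasurableSpace β]
    {μ : Measure α} {ν : Measure β} [SFinite μ] [SFinite ν] (f : β × α → ℝ≥0∞) (s : Set (β × α)) :
    ∫⁻ z in Prod.swap ⁻¹' s, f z.swap ∂μ.prod ν = ∫⁻ z in s, f z ∂ν.prod μ :=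
  Measure.measurePreserving_swap.setLIntegral_comp_preimage_emb
    MeasurableEquiv.prodComm.measurableEmbedding f s

theorem ae_snd_ne {α β : Type*} [MeasurableSpace α] [MeasurableSpace β] {μ : Measure α}
    {ν : Measure β} [SFinite ν] [NullSingletonClass ν] (b : β) : ∀ᵐ y ∂μ.prod ν, y.2 ≠ b := by
  have : {y : α × β | y.2 = b} = univ ×ˢ {b} := by ext; simp
  simp [ae_iff, this, Measure.prod_prod]

theorem Dfac_swap (θ : ℝ) (x y : ℝ × ℝ) : Dfac θ x.swap y.swap = Dfac θ x y := by
  simp only [Dfac, Prod.fst_swap, Prod.snd_swap, add_comm]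

theorem lintegral_far_fst_rpow_mul_decay_le (p q : ℝ) {r θ₁ θ₂ : ℝ} (hr : 0 < r) (hθ₁ : 0 < θ₁)
    (hθ₂ : 0 < θ₂) :
    ∫⁻ y in {y : ℝ × ℝ | r ≤ |p - y.1|}, ENNReal.ofReal (|p - y.1| ^ (-(1 + θ₁))) *
      ENNReal.ofReal ((|p - y.1| / |q - y.2| + |q - y.2| / |p - y.1|) ^ (-θ₂) * |q - y.2|⁻¹)
      ≤ ENNReal.ofReal (8 / (θ₁ * θ₂) * r ^ (-θ₁)) := by
  have hset : {y : ℝ × ℝ | r ≤ |p - y.1|} = {u | r ≤ |p - u|} ×ˢ univ := by ext; simp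
  rw [hset, Measure.volume_eq_prod, setLIntegral_prod _ (by fun_prop)]
  simp only [Measure.restrict_univ]
  calc ∫⁻ u in {u | r ≤ |p - u|}, ∫⁻ v, ENNReal.ofReal (|p - u| ^ (-(1 + θ₁))) *
        ENNReal.ofReal ((|p - u| / |q - v| + |q - v| / |p - u|) ^ (-θ₂) * |q - v|⁻¹)
      ≤ ∫⁻ u in {u | r ≤ |p - u|}, ENNReal.ofReal (|p - u| ^ (-(1 + θ₁))) *
        ENNReal.ofReal (4 / θ₂) := by
        refine setLIntegral_mono' (measurableSet_le measurable_const (by fun_prop)) fun u hu => ?_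
        rw [lintegral_const_mul' _ _ ENNReal.ofReal_ne_top]
        gcongr
        exact lintegral_add_div_rpow_neg_mul_inv_le q (hr.trans_le hu) hθ₂
    _ = ENNReal.ofReal (8 / (θ₁ * θ₂) * r ^ (-θ₁)) := by
        rw [lintegral_mul_const' _ _ ENNReal.ofReal_ne_top, lintegral_far_rpow p hr hθ₁,
          ← ENNReal.ofReal_mul (by positivity)]
        congr 1
        field_simp
        ring

namespace IsCZXKernel

variable {θ₁ θ₂ C : ℝ} {K : ℝ × ℝ → ℝ × ℝ → ℂ}

theorem const_nonneg (hK : IsCZXKernel θ₁ θ₂ C K) : 0 ≤ C := by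
  have h := (norm_nonneg _).trans (hK.size (0, 0) (1, 1) zero_ne_one zero_ne_one)
  simp only [Dfac, zero_sub, abs_neg, abs_one, div_one, mul_one, one_add_one_eq_two] at h
  exact nonneg_of_mul_nonneg_left h (by positivity)

theorem measurable_right (hK : IsCZXKernel θ₁ θ₂ C K) (x : ℝ × ℝ) : Measurable (K x) :=
  hK.meas.comp (measurable_const.prodMk measurable_id)

theorem swap (hK : IsCZXKernel θ₁ θ₂ C K) :
    IsCZXKernel θ₁ θ₂ C fun x y => K x.swap y.swap where
  meas := hK.meas.comp (measurable_swap.prodMap measurable_swap)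
  size x y h1 h2 := by
    convert hK.size x.swap y.swap h2 h1 using 1
    simp only [Dfac_swap, Prod.fst_swap, Prod.snd_swap]; ring
  holder_x1 x y w h1 h2 hw := by
    convert hK.holder_x2 x.swap y.swap w h2 h1 hw using 1 <;>
      simp only [Dfac_swap, Prod.fst_swap, Prod.snd_swap, Prod.swap_prod_mk]; ring
  holder_x2 x y w h1 h2 hw := by
    convert hK.holder_x1 x.swap y.swap w h2 h1 hw using 1 <;>
      simp only [Dfac_swap, Prod.fst_swap, Prod.snd_swap, Prod.swap_prod_mk]; ring
  holder_y1 x y w h1 h2 hw := by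
    convert hK.holder_y2 x.swap y.swap w h2 h1 hw using 1 <;>
      simp only [Dfac_swap, Prod.fst_swap, Prod.snd_swap, Prod.swap_prod_mk]; ring
  holder_y2 x y w h1 h2 hw := by
    convert hK.holder_y1 x.swap y.swap w h2 h1 hw using 1 <;>
      simp only [Dfac_swap, Prod.fst_swap, Prod.snd_swap, Prod.swap_prod_mk]; ring

theorem norm_le_rpow_mul_rpow (hK : IsCZXKernel θ₁ θ₂ C K) (hθ₂ : 0 ≤ θ₂) {x y : ℝ × ℝ}
    (h₁ : x.1 ≠ y.1) (h₂ : x.2 ≠ y.2) :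
    ‖K x y‖ ≤ C * (|x.1 - y.1| ^ (-(1 + θ₂)) * |x.2 - y.2| ^ (θ₂ - 1)) := by
  have hs : 0 < |x.1 - y.1| := abs_pos.2 (sub_ne_zero.2 h₁)
  have ht : 0 < |x.2 - y.2| := abs_pos.2 (sub_ne_zero.2 h₂)
  refine (hK.size x y h₁ h₂).trans ?_
  rw [Dfac, mul_assoc, mul_assoc]
  refine mul_le_mul_of_nonneg_left ?_ hK.const_nonneg
  calc 1 / |x.1 - y.1| * (1 / |x.2 - y.2| *
        (|x.1 - y.1| / |x.2 - y.2| + |x.2 - y.2| / |x.1 - y.1|) ^ (-θ₂))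
      ≤ |x.1 - y.1|⁻¹ * (|x.1 - y.1| ^ (-θ₂) * |x.2 - y.2| ^ (θ₂ - 1)) := by
        rw [one_div, one_div, mul_comm (|x.2 - y.2|⁻¹)]
        exact mul_le_mul_of_nonneg_left (add_div_rpow_neg_mul_inv_le hs ht hθ₂) (by positivity)
    _ = |x.1 - y.1| ^ (-(1 + θ₂)) * |x.2 - y.2| ^ (θ₂ - 1) := by
        rw [neg_add, rpow_add hs, rpow_neg_one, mul_assoc]

theorem norm_sub_fst_le (hK : IsCZXKernel θ₁ θ₂ C K) (hθ₁ : 0 ≤ θ₁) {x y : ℝ × ℝ} {w r : ℝ}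
    (hr : 0 < r) (hw : 2 * |x.1 - w| ≤ r) (h₁ : r ≤ |x.1 - y.1|) (h₂ : x.2 ≠ y.2) :
    ‖K x y - K (w, x.2) y‖ ≤ C * r ^ θ₁ * (|x.1 - y.1| ^ (-(1 + θ₁)) *
      ((|x.1 - y.1| / |x.2 - y.2| + |x.2 - y.2| / |x.1 - y.1|) ^ (-θ₂) * |x.2 - y.2|⁻¹)) := by
  have hC := hK.const_nonneg
  have hs : 0 < |x.1 - y.1| := hr.trans_le h₁
  have hwr : |x.1 - w| ^ θ₁ ≤ r ^ θ₁ := rpow_le_rpow (abs_nonneg _) (by linarith) hθ₁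
  refine (hK.holder_x1 x y w (sub_ne_zero.1 (abs_pos.1 hs)) h₂ (by linarith)).trans ?_
  rw [Dfac, rpow_neg hs.le, one_div, div_eq_mul_inv]
  calc C * (|x.1 - w| ^ θ₁ * (|x.1 - y.1| ^ (1 + θ₁))⁻¹) * |x.2 - y.2|⁻¹ *
        (|x.1 - y.1| / |x.2 - y.2| + |x.2 - y.2| / |x.1 - y.1|) ^ (-θ₂)
      = C * |x.1 - w| ^ θ₁ * ((|x.1 - y.1| ^ (1 + θ₁))⁻¹ *
        ((|x.1 - y.1| / |x.2 - y.2| + |x.2 - y.2| / |x.1 - y.1|) ^ (-θ₂) *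
          |x.2 - y.2|⁻¹)) := by ring
    _ ≤ _ := by gcongr

theorem setLIntegral_enorm_sub_fst_le (hK : IsCZXKernel θ₁ θ₂ C K) (hθ₁ : 0 < θ₁)
    (hθ₂ : 0 < θ₂) (x : ℝ × ℝ) {w r : ℝ} (hr : 0 < r) (hw : 2 * |x.1 - w| ≤ r) :
    ∫⁻ y in {y | r ≤ |x.1 - y.1|}, ‖K x y - K (w, x.2) y‖ₑ
      ≤ ENNReal.ofReal (8 * C / (θ₁ * θ₂)) := by
  have hC := hK.const_nonneg
  calc ∫⁻ y in {y | r ≤ |x.1 - y.1|}, ‖K x y - K (w, x.2) y‖ₑ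
      ≤ ∫⁻ y in {y : ℝ × ℝ | r ≤ |x.1 - y.1|}, ENNReal.ofReal (C * r ^ θ₁) *
        (ENNReal.ofReal (|x.1 - y.1| ^ (-(1 + θ₁))) * ENNReal.ofReal
          ((|x.1 - y.1| / |x.2 - y.2| + |x.2 - y.2| / |x.1 - y.1|) ^ (-θ₂) *
            |x.2 - y.2|⁻¹)) := by
        refine setLIntegral_mono_ae (by fun_prop) ?_
        filter_upwards [ae_snd_ne x.2] with y h₂ h₁
        rw [← ENNReal.ofReal_mul (by positivity), ← ENNReal.ofReal_mul (by positivity),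
          ← ofReal_norm]
        exact ENNReal.ofReal_le_ofReal (hK.norm_sub_fst_le hθ₁.le hr hw h₁ h₂.symm)
    _ ≤ ENNReal.ofReal (C * r ^ θ₁) * ENNReal.ofReal (8 / (θ₁ * θ₂) * r ^ (-θ₁)) := by
        rw [lintegral_const_mul' _ _ ENNReal.ofReal_ne_top]
        gcongr
        exact lintegral_far_fst_rpow_mul_decay_le x.1 x.2 hr hθ₁ hθ₂
    _ = ENNReal.ofReal (8 * C / (θ₁ * θ₂)) := by
        rw [← ENNReal.ofReal_mul (by positivity), rpow_neg hr.le]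
        congr 1
        field_simp

theorem setLIntegral_enorm_sub_snd_le (hK : IsCZXKernel θ₁ θ₂ C K) (hθ₁ : 0 < θ₁)
    (hθ₂ : 0 < θ₂) (x : ℝ × ℝ) {w r : ℝ} (hr : 0 < r) (hw : 2 * |x.2 - w| ≤ r) :
    ∫⁻ y in {y | r ≤ |x.2 - y.2|}, ‖K x y - K (x.1, w) y‖ₑ
      ≤ ENNReal.ofReal (8 * C / (θ₁ * θ₂)) := by
  rw [Measure.volume_eq_prod, ← setLIntegral_comp_swap]
  exact hK.swap.setLIntegral_enorm_sub_fst_le hθ₁ hθ₂ x.swap hr hw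

theorem setLIntegral_far_fst_near_snd_enorm_le (hK : IsCZXKernel θ₁ θ₂ C K) (hθ₂ : 0 < θ₂)
    (x : ℝ × ℝ) {a b : ℝ} (ha : 0 < a) (hb : 0 < b) (hba : b ≤ 2 * a) :
    ∫⁻ y in {y | a ≤ |x.1 - y.1|} ∩ {y | |x.2 - y.2| ≤ b}, ‖K x y‖ₑ
      ≤ ENNReal.ofReal (4 * 2 ^ θ₂ * C / θ₂ ^ 2) := by
  have hC := hK.const_nonneg
  have hset : {y : ℝ × ℝ | a ≤ |x.1 - y.1|} ∩ {y | |x.2 - y.2| ≤ b}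
      = {u | a ≤ |x.1 - u|} ×ˢ {v | |x.2 - v| ≤ b} := by ext; simp
  have hb2 : b ^ θ₂ ≤ 2 ^ θ₂ * a ^ θ₂ := by
    rw [← mul_rpow zero_le_two ha.le]; exact rpow_le_rpow hb.le hba hθ₂.le
  calc ∫⁻ y in {y | a ≤ |x.1 - y.1|} ∩ {y | |x.2 - y.2| ≤ b}, ‖K x y‖ₑ
      ≤ ∫⁻ y in {y : ℝ × ℝ | a ≤ |x.1 - y.1|} ∩ {y | |x.2 - y.2| ≤ b}, ENNReal.ofReal C *
        (ENNReal.ofReal (|x.1 - y.1| ^ (-(1 + θ₂))) *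
          ENNReal.ofReal (|x.2 - y.2| ^ (θ₂ - 1))) := by
        refine setLIntegral_mono_ae (by fun_prop) ?_
        filter_upwards [ae_snd_ne x.2] with y h₂ h
        have h₁ : x.1 ≠ y.1 := sub_ne_zero.1 (abs_pos.1 (ha.trans_le h.1))
        rw [← ENNReal.ofReal_mul (by positivity), ← ENNReal.ofReal_mul (by positivity),
          ← ofReal_norm]
        exact ENNReal.ofReal_le_ofReal (hK.norm_le_rpow_mul_rpow hθ₂.le h₁ h₂.symm)
    _ = ENNReal.ofReal C * (ENNReal.ofReal (2 / θ₂ * a ^ (-θ₂)) *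
          ENNReal.ofReal (2 / θ₂ * b ^ θ₂)) := by
        rw [lintegral_const_mul' _ _ ENNReal.ofReal_ne_top, hset, Measure.volume_eq_prod,
          ← Measure.prod_restrict,
          lintegral_prod_mul (f := fun u => ENNReal.ofReal (|x.1 - u| ^ (-(1 + θ₂))))
            (g := fun v => ENNReal.ofReal (|x.2 - v| ^ (θ₂ - 1))) (by fun_prop) (by fun_prop),
          lintegral_far_rpow x.1 ha hθ₂, lintegral_near_rpow x.2 hb hθ₂]
    _ ≤ ENNReal.ofReal (4 * 2 ^ θ₂ * C / θ₂ ^ 2) := by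
        rw [← ENNReal.ofReal_mul (by positivity), ← ENNReal.ofReal_mul (by positivity)]
        refine ENNReal.ofReal_le_ofReal ?_
        calc C * (2 / θ₂ * a ^ (-θ₂) * (2 / θ₂ * b ^ θ₂))
            ≤ C * (2 / θ₂ * a ^ (-θ₂) * (2 / θ₂ * (2 ^ θ₂ * a ^ θ₂))) := by gcongr
          _ = 4 * 2 ^ θ₂ * C / θ₂ ^ 2 := by
              rw [rpow_neg ha.le]
              field_simp
              ring

theorem setLIntegral_far_fst_enorm_sub_snd_le (hK : IsCZXKernel θ₁ θ₂ C K) (hθ₁ : 0 < θ₁)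
    (hθ₂ : 0 < θ₂) {c : ℝ × ℝ} {t ℓ : ℝ} (hℓ : 0 < ℓ) (ht : |t - c.2| ≤ ℓ / 2) :
    ∫⁻ y in {y | 3 * ℓ / 2 < |c.1 - y.1|}, ‖K (c.1, t) y - K c y‖ₑ
      ≤ ENNReal.ofReal (8 * C / (θ₁ * θ₂) + 8 * 2 ^ θ₂ * C / θ₂ ^ 2) := by
  have hC := hK.const_nonneg
  set p : ℝ × ℝ := (c.1, t)
  set H : Set (ℝ × ℝ) := {y | 3 * ℓ / 2 < |c.1 - y.1|}
  set V : Set (ℝ × ℝ) := {y | 3 * ℓ / 2 < |c.2 - y.2|}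
  have hV : MeasurableSet V := measurableSet_lt measurable_const (by fun_prop)
  have hHV : H ∩ V ⊆ {y | ℓ ≤ |p.2 - y.2|} := by
    rintro y ⟨-, hy⟩
    have hy : 3 * ℓ / 2 < |c.2 - y.2| := hy
    have := abs_sub_le c.2 t y.2
    rw [abs_sub_comm c.2 t] at this
    show ℓ ≤ |t - y.2|
    linarith
  have hHVp : H \ V ⊆ {y | 3 * ℓ / 2 ≤ |p.1 - y.1|} ∩ {y | |p.2 - y.2| ≤ 2 * ℓ} := by
    rintro y ⟨hy₁, hy₂⟩
    have hy₁ : 3 * ℓ / 2 < |c.1 - y.1| := hy₁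
    have hy₂ : ¬ 3 * ℓ / 2 < |c.2 - y.2| := hy₂
    have := abs_sub_le t c.2 y.2
    exact ⟨hy₁.le, show |t - y.2| ≤ 2 * ℓ by linarith⟩
  have hHVc : H \ V ⊆ {y | 3 * ℓ / 2 ≤ |c.1 - y.1|} ∩ {y | |c.2 - y.2| ≤ 3 * ℓ / 2} :=
    fun y ⟨hy₁, hy₂⟩ => ⟨show 3 * ℓ / 2 ≤ |c.1 - y.1| from le_of_lt hy₁,
      show |c.2 - y.2| ≤ 3 * ℓ / 2 from le_of_not_gt hy₂⟩
  calc ∫⁻ y in H, ‖K p y - K c y‖ₑ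
      = (∫⁻ y in H ∩ V, ‖K p y - K c y‖ₑ) + ∫⁻ y in H \ V, ‖K p y - K c y‖ₑ :=
        (lintegral_inter_add_sdiff _ _ hV).symm
    _ ≤ (∫⁻ y in {y | ℓ ≤ |p.2 - y.2|}, ‖K p y - K c y‖ₑ)
          + ∫⁻ y in H \ V, (‖K p y‖ₑ + ‖K c y‖ₑ) :=
        add_le_add (lintegral_mono_set hHV) (lintegral_mono fun y => enorm_sub_le)
    _ ≤ (∫⁻ y in {y | ℓ ≤ |p.2 - y.2|}, ‖K p y - K c y‖ₑ)
          + ((∫⁻ y in {y | 3 * ℓ / 2 ≤ |p.1 - y.1|} ∩ {y | |p.2 - y.2| ≤ 2 * ℓ}, ‖K p y‖ₑ)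
          + ∫⁻ y in {y | 3 * ℓ / 2 ≤ |c.1 - y.1|} ∩ {y | |c.2 - y.2| ≤ 3 * ℓ / 2}, ‖K c y‖ₑ) := by
        rw [lintegral_add_left (f := fun y => ‖K p y‖ₑ) (hK.measurable_right p).enorm]
        gcongr _ + (?_ + ?_)
        · exact lintegral_mono_set hHVp
        · exact lintegral_mono_set hHVc
    _ ≤ ENNReal.ofReal (8 * C / (θ₁ * θ₂)) + (ENNReal.ofReal (4 * 2 ^ θ₂ * C / θ₂ ^ 2)
          + ENNReal.ofReal (4 * 2 ^ θ₂ * C / θ₂ ^ 2)) := by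
        gcongr ?_ + (?_ + ?_)
        · exact hK.setLIntegral_enorm_sub_snd_le hθ₁ hθ₂ p hℓ (by linarith)
        · exact hK.setLIntegral_far_fst_near_snd_enorm_le hθ₂ p (by linarith) (by linarith)
            (by linarith)
        · exact hK.setLIntegral_far_fst_near_snd_enorm_le hθ₂ c (by linarith) (by linarith)
            (by linarith)
    _ = ENNReal.ofReal (8 * C / (θ₁ * θ₂) + 8 * 2 ^ θ₂ * C / θ₂ ^ 2) := by
        rw [← ENNReal.ofReal_add (by positivity) (by positivity),
          ← ENNReal.ofReal_add (by positivity) (by positivity)]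
        ring_nf

theorem setLIntegral_far_fst_enorm_sub_center_le (hK : IsCZXKernel θ₁ θ₂ C K) (hθ₁ : 0 < θ₁)
    (hθ₂ : 0 < θ₂) {c x : ℝ × ℝ} {ℓ : ℝ} (hℓ : 0 < ℓ) (hx₁ : |x.1 - c.1| ≤ ℓ / 2)
    (hx₂ : |x.2 - c.2| ≤ ℓ / 2) :
    ∫⁻ y in {y | 3 * ℓ / 2 < |c.1 - y.1|}, ‖K x y - K c y‖ₑ
      ≤ ENNReal.ofReal (16 * C / (θ₁ * θ₂) + 8 * 2 ^ θ₂ * C / θ₂ ^ 2) := by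
  have hC := hK.const_nonneg
  set p : ℝ × ℝ := (c.1, x.2)
  have hfar : {y : ℝ × ℝ | 3 * ℓ / 2 < |c.1 - y.1|} ⊆ {y | ℓ ≤ |x.1 - y.1|} := by
    intro y (hy : 3 * ℓ / 2 < |c.1 - y.1|)
    have := abs_sub_le c.1 x.1 y.1
    rw [abs_sub_comm c.1 x.1] at this
    show ℓ ≤ |x.1 - y.1|
    linarith
  calc ∫⁻ y in {y | 3 * ℓ / 2 < |c.1 - y.1|}, ‖K x y - K c y‖ₑ
      ≤ ∫⁻ y in {y | 3 * ℓ / 2 < |c.1 - y.1|}, (‖K x y - K p y‖ₑ + ‖K p y - K c y‖ₑ) := by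
        refine lintegral_mono fun y => ?_
        simpa only [edist_eq_enorm_sub] using edist_triangle (K x y) (K p y) (K c y)
    _ = (∫⁻ y in {y | 3 * ℓ / 2 < |c.1 - y.1|}, ‖K x y - K p y‖ₑ)
          + ∫⁻ y in {y | 3 * ℓ / 2 < |c.1 - y.1|}, ‖K p y - K c y‖ₑ :=
        lintegral_add_left (f := fun y => ‖K x y - K p y‖ₑ)
          ((hK.measurable_right x).sub (hK.measurable_right p)).enorm _
    _ ≤ ENNReal.ofReal (8 * C / (θ₁ * θ₂))
          + ENNReal.ofReal (8 * C / (θ₁ * θ₂) + 8 * 2 ^ θ₂ * C / θ₂ ^ 2) :=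
        add_le_add ((lintegral_mono_set hfar).trans
            (hK.setLIntegral_enorm_sub_fst_le hθ₁ hθ₂ x hℓ (by linarith)))
          (hK.setLIntegral_far_fst_enorm_sub_snd_le hθ₁ hθ₂ hℓ hx₂)
    _ = ENNReal.ofReal (16 * C / (θ₁ * θ₂) + 8 * 2 ^ θ₂ * C / θ₂ ^ 2) := by
        rw [← ENNReal.ofReal_add (by positivity) (by positivity)]
        ring_nf

end IsCZXKernel

/-- Lemma 2.4, the Hörmander integral condition for CZX kernels. -/
theorem statement3 (θ₁ θ₂ : ℝ) (hθ₁ : θ₁ ∈ Ioc (0:ℝ) 1) (hθ₂ : θ₂ ∈ Ioc (0:ℝ) 1)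
    (CK : ℝ) (hCK : 0 < CK) :
    ∃ C : ℝ, 0 < C ∧ ∀ K : ℝ × ℝ → ℝ × ℝ → ℂ, IsCZXKernel θ₁ θ₂ CK K →
      ∀ (c : ℝ × ℝ) (ℓ : ℝ), 0 < ℓ → ∀ x ∈ sqr c ℓ,
        ∫⁻ y in (sqr c (3 * ℓ))ᶜ, (‖K x y - K c y‖₊ : ℝ≥0∞) ≤ ENNReal.ofReal C := by
  obtain ⟨hθ₁, -⟩ := hθ₁
  obtain ⟨hθ₂, -⟩ := hθ₂
  set B := 16 * CK / (θ₁ * θ₂) + 8 * 2 ^ θ₂ * CK / θ₂ ^ 2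
  refine ⟨2 * B, by positivity, fun K hK c ℓ hℓ x hx => ?_⟩
  obtain ⟨⟨hx₁, hx₁'⟩, hx₂, hx₂'⟩ := hx
  have hxc₁ : |x.1 - c.1| ≤ ℓ / 2 := abs_sub_le_iff.2 ⟨by linarith, by linarith⟩
  have hxc₂ : |x.2 - c.2| ≤ ℓ / 2 := abs_sub_le_iff.2 ⟨by linarith, by linarith⟩
  have hcover : (sqr c (3 * ℓ))ᶜ
      ⊆ {y | 3 * ℓ / 2 < |c.1 - y.1|} ∪ {y | 3 * ℓ / 2 < |c.2 - y.2|} := by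
    intro y hy
    by_contra hy'
    simp only [mem_union, mem_ofPred_eq, not_or, not_lt, abs_le] at hy'
    exact hy ⟨⟨by linarith, by linarith⟩, by linarith, by linarith⟩
  have hsnd : ∫⁻ y in {y | 3 * ℓ / 2 < |c.2 - y.2|}, ‖K x y - K c y‖ₑ ≤ ENNReal.ofReal B := by
    rw [Measure.volume_eq_prod, ← setLIntegral_comp_swap]
    exact hK.swap.setLIntegral_far_fst_enorm_sub_center_le (c := c.swap) (x := x.swap) hθ₁ hθ₂
      hℓ hxc₂ hxc₁
  calc ∫⁻ y in (sqr c (3 * ℓ))ᶜ, ‖K x y - K c y‖ₑ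
      ≤ (∫⁻ y in {y | 3 * ℓ / 2 < |c.1 - y.1|}, ‖K x y - K c y‖ₑ)
        + ∫⁻ y in {y | 3 * ℓ / 2 < |c.2 - y.2|}, ‖K x y - K c y‖ₑ :=
        (lintegral_mono_set hcover).trans (lintegral_union_le _ _ _)
    _ ≤ ENNReal.ofReal B + ENNReal.ofReal B :=
        add_le_add (hK.setLIntegral_far_fst_enorm_sub_center_le hθ₁ hθ₂ hℓ hxc₁ hxc₂) hsnd
    _ = ENNReal.ofReal (2 * B) := by
        rw [← ENNReal.ofReal_add (by positivity) (by positivity), two_mul]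
end
end

section
/- Let θ₁ ∈ (0,1] and let K be a CZX kernel on ℝ² with parameters θ₁, θ₂ = 1 and constant C_K. Then there is a constant C, depending only on C_K and θ₁, with the following property: for every axes-parallel square J ⊂ ℝ², every bounded compactly supported measurable f that vanishes on 3J, and all x, y, z ∈ J, the integrals ∫_{(3J)^c} K(y,u) f(u) du and ∫_{(3J)^c} K(z,u) f(u) du converge absolutely and | ∫_{(3J)^c} K(y,u) f(u) du − ∫_{(3J)^c} K(z,u) f(u) du | ≤ C · M_* f(x), where M_* is the strong maximal operator. -/
/-!
For `θ₂ = 1` the decay factor is `Dfac 1 x u = |a| |b| / (a² + b²)` with `(a, b) = x - u`, so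
`‖K x u‖ ≤ C_K / |x - u|²`, and moving `x¹` by `δ` changes `K x u` by at most
`C_K (|δ| / |a|) ^ θ₁ / |x - u|²` (likewise for `x²`).

Cover `(3J)ᶜ` by products `A_j × A_k` of dyadic shells around the centre of `J`. Moving from
`y` to `z` one coordinate at a time, on `A_j × A_k` the difference `K y u - K z u` is
`O(r ^ j r ^ k / (2 ^ j 2 ^ k ℓ²))` with `r = 2 ^ (-θ₁ / 2) < 1`: a coordinate with positive
shell index is moved by the Hölder bound, one with index `0` is handled by the size bound and
the decay in the other coordinate. As `A_j × A_k` lies in a rectangle of area `9 · 2 ^ j 2 ^ k ℓ²`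
containing `x`, the shell contributes `O(r ^ j r ^ k M_* f(x))`, and the double geometric series
converges.
-/

open MeasureTheory Real Set Filter
open scoped ENNReal NNReal

noncomputable section

/-- The axes-parallel rectangle with centre `c` and side lengths `t₁, t₂`. -/
def rect (c : ℝ × ℝ) (t₁ t₂ : ℝ) : Set (ℝ × ℝ) :=
  Icc (c.1 - t₁ / 2) (c.1 + t₁ / 2) ×ˢ Icc (c.2 - t₂ / 2) (c.2 + t₂ / 2)

/-- The real-valued kernel `K_{t₁,t₂,θ₂}` built from a nonnegative bump function `φ`. -/
def KphiR (θ₂ t₁ t₂ : ℝ) (φ : ℝ → ℝ) (x : ℝ × ℝ) : ℝ :=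
  (t₁ / t₂ + t₂ / t₁) ^ (-θ₂) * ((1 / t₁) * φ (x.1 / t₁)) * ((1 / t₂) * φ (x.2 / t₂))

/-- The strong maximal operator on `ℝ²` (supremum of averages over all axes-parallel
rectangles containing `x`). -/
def strongMax (f : ℝ × ℝ → ℂ) (x : ℝ × ℝ) : ℝ≥0∞ :=
  ⨆ (c : ℝ × ℝ) (t₁ : ℝ) (t₂ : ℝ) (_ : 0 < t₁) (_ : 0 < t₂) (_ : x ∈ rect c t₁ t₂),
    (∫⁻ y in rect c t₁ t₂, (‖f y‖₊ : ℝ≥0∞)) / volume (rect c t₁ t₂)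

lemma dfac_one {x y : ℝ × ℝ} (h1 : x.1 ≠ y.1) (h2 : x.2 ≠ y.2) :
    Dfac 1 x y = |x.1 - y.1| * |x.2 - y.2| / ((x.1 - y.1) ^ 2 + (x.2 - y.2) ^ 2) := by
  have ha : 0 < |x.1 - y.1| := abs_pos.2 (sub_ne_zero.2 h1)
  have hb : 0 < |x.2 - y.2| := abs_pos.2 (sub_ne_zero.2 h2)
  rw [Dfac, Real.rpow_neg_one, ← sq_abs (x.1 - y.1), ← sq_abs (x.2 - y.2)]
  field_simp

lemma mem_rect_iff {c u : ℝ × ℝ} {t₁ t₂ : ℝ} :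
    u ∈ rect c t₁ t₂ ↔ |u.1 - c.1| ≤ t₁ / 2 ∧ |u.2 - c.2| ≤ t₂ / 2 := by
  simp only [rect, mem_prod, mem_Icc, abs_sub_le_iff]
  constructor <;> rintro ⟨⟨_, _⟩, _, _⟩ <;> refine ⟨⟨?_, ?_⟩, ?_, ?_⟩ <;> linarith

lemma mem_sqr_iff {c u : ℝ × ℝ} {ℓ : ℝ} :
    u ∈ sqr c ℓ ↔ |u.1 - c.1| ≤ ℓ / 2 ∧ |u.2 - c.2| ≤ ℓ / 2 :=
  mem_rect_iff

lemma volume_rect (c : ℝ × ℝ) (t₁ t₂ : ℝ) :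
    volume (rect c t₁ t₂) = ENNReal.ofReal t₁ * ENNReal.ofReal t₂ := by
  rw [rect, Measure.volume_eq_prod, Measure.prod_prod, Real.volume_Icc, Real.volume_Icc]
  ring_nf

lemma lintegral_rect_le_strongMax (f : ℝ × ℝ → ℂ) {c x : ℝ × ℝ} {t₁ t₂ : ℝ} (ht₁ : 0 < t₁)
    (ht₂ : 0 < t₂) (hx : x ∈ rect c t₁ t₂) :
    ∫⁻ u in rect c t₁ t₂, ‖f u‖ₑ ≤ ENNReal.ofReal t₁ * ENNReal.ofReal t₂ * strongMax f x := by
  have hvol : volume (rect c t₁ t₂) ≠ 0 := by simp [volume_rect, ht₁, ht₂]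
  have havg : (∫⁻ u in rect c t₁ t₂, ‖f u‖ₑ) / volume (rect c t₁ t₂) ≤ strongMax f x :=
    le_iSup_of_le c <| le_iSup_of_le t₁ <| le_iSup_of_le t₂ <| le_iSup_of_le ht₁ <|
      le_iSup_of_le ht₂ <| le_iSup_of_le hx le_rfl
  rw [ENNReal.div_le_iff hvol (by simp [volume_rect, ENNReal.mul_eq_top])] at havg
  rwa [← volume_rect, mul_comm]

lemma setLIntegral_le_strongMax {F f : ℝ × ℝ → ℂ} (hf : Measurable f) {s : Set (ℝ × ℝ)}
    {c x : ℝ × ℝ} {t₁ t₂ β : ℝ} (ht₁ : 0 < t₁) (ht₂ : 0 < t₂) (hβ : 0 ≤ β)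
    (hs : s ⊆ rect c t₁ t₂) (hx : x ∈ rect c t₁ t₂) (hF : ∀ᵐ u, u ∈ s → ‖F u‖ ≤ β * ‖f u‖) :
    ∫⁻ u in s, ‖F u‖ₑ ≤ ENNReal.ofReal (β * t₁ * t₂) * strongMax f x := by
  calc ∫⁻ u in s, ‖F u‖ₑ ≤ ∫⁻ u in s, ENNReal.ofReal β * ‖f u‖ₑ := by
        refine setLIntegral_mono_ae (hf.enorm.const_mul _).aemeasurable ?_
        filter_upwards [hF] with u hu hus
        rw [← ofReal_norm, ← ofReal_norm, ← ENNReal.ofReal_mul hβ]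
        exact ENNReal.ofReal_le_ofReal (hu hus)
    _ ≤ ENNReal.ofReal β * ∫⁻ u in rect c t₁ t₂, ‖f u‖ₑ := by
        rw [lintegral_const_mul _ hf.enorm]
        gcongr
    _ ≤ ENNReal.ofReal β * (ENNReal.ofReal t₁ * ENNReal.ofReal t₂ * strongMax f x) := by
        gcongr
        exact lintegral_rect_le_strongMax f ht₁ ht₂ hx
    _ = ENNReal.ofReal (β * t₁ * t₂) * strongMax f x := by
        rw [ENNReal.ofReal_mul (by positivity), ENNReal.ofReal_mul hβ]
        ring

lemma ae_fst_ne (a : ℝ) : ∀ᵐ u : ℝ × ℝ, u.1 ≠ a := by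
  rw [Measure.volume_eq_prod]
  exact Measure.quasiMeasurePreserving_fst.ae (Measure.ae_ne volume a)

lemma ae_snd_ne_s15 (a : ℝ) : ∀ᵐ u : ℝ × ℝ, u.2 ≠ a := by
  rw [Measure.volume_eq_prod]
  exact Measure.quasiMeasurePreserving_snd.ae (Measure.ae_ne volume a)

lemma tsum_ofReal_mul_pow_mul_pow {r : ℝ} (hr₀ : 0 ≤ r) (hr₁ : r < 1) {C : ℝ} (hC : 0 ≤ C) :
    ∑' p : ℕ × ℕ, ENNReal.ofReal (C * (r ^ p.1 * r ^ p.2)) =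
      ENNReal.ofReal (C * (1 - r)⁻¹ ^ 2) := by
  have hgeom : (1 - ENNReal.ofReal r)⁻¹ = ENNReal.ofReal (1 - r)⁻¹ := by
    rw [ENNReal.ofReal_inv_of_pos (by linarith), ENNReal.ofReal_sub _ hr₀, ENNReal.ofReal_one]
  simp_rw [ENNReal.ofReal_mul hC, ENNReal.ofReal_mul (pow_nonneg hr₀ _), ENNReal.ofReal_pow hr₀]
  rw [ENNReal.ofReal_pow (inv_nonneg.2 (sub_nonneg.2 hr₁.le)), ENNReal.tsum_mul_left,
    ENNReal.tsum_prod (f := fun j k => ENNReal.ofReal r ^ j * ENNReal.ofReal r ^ k)]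
  simp_rw [ENNReal.tsum_mul_left, ENNReal.tsum_mul_right, ENNReal.tsum_geometric, hgeom, sq]

lemma one_half_rpow_half_mem_Ico {θ : ℝ} (hθ : θ ∈ Ioc (0 : ℝ) 1) :
    (1 / 2 : ℝ) ^ (θ / 2) ∈ Ico (1 / 2) 1 := by
  refine ⟨?_, Real.rpow_lt_one (by norm_num) (by norm_num) (by linarith [hθ.1])⟩
  simpa using Real.rpow_le_rpow_of_exponent_ge (by norm_num : (0 : ℝ) < 1 / 2) (by norm_num)
    (by linarith [hθ.2] : θ / 2 ≤ 1)

lemma sq_one_half_rpow_half (θ : ℝ) : ((1 / 2 : ℝ) ^ (θ / 2)) ^ 2 = (1 / 2) ^ θ := by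
  rw [← Real.rpow_natCast, ← Real.rpow_mul (by norm_num)]
  norm_num

def dyadicShell (c h : ℝ) : ℕ → Set ℝ
  | 0 => {t | |t - c| ≤ h}
  | j + 1 => {t | h * 2 ^ j < |t - c| ∧ |t - c| ≤ h * 2 ^ (j + 1)}

lemma exists_mem_dyadicShell {h : ℝ} (hh : 0 < h) (c t : ℝ) : ∃ j, t ∈ dyadicShell c h j := by
  obtain ⟨n, hn⟩ : ∃ n : ℕ, |t - c| ≤ h * 2 ^ n := by
    obtain ⟨n, hn⟩ := pow_unbounded_of_one_lt (|t - c| / h) one_lt_two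
    exact ⟨n, by rw [div_lt_iff₀ hh] at hn; linarith⟩
  induction n with
  | zero => exact ⟨0, by simpa [dyadicShell] using hn⟩
  | succ n ih =>
    by_cases hc : |t - c| ≤ h * 2 ^ n
    · exact ih hc
    · exact ⟨n + 1, lt_of_not_ge hc, hn⟩

lemma iUnion_dyadicShell_prod (c : ℝ × ℝ) {h : ℝ} (hh : 0 < h) :
    ⋃ p : ℕ × ℕ, dyadicShell c.1 h p.1 ×ˢ dyadicShell c.2 h p.2 = univ := by
  refine eq_univ_of_forall fun u => mem_iUnion.2 ?_
  obtain ⟨j, hj⟩ := exists_mem_dyadicShell hh c.1 u.1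
  obtain ⟨k, hk⟩ := exists_mem_dyadicShell hh c.2 u.2
  exact ⟨(j, k), hj, hk⟩

lemma abs_sub_le_of_mem_dyadicShell {c h t : ℝ} {j : ℕ} (ht : t ∈ dyadicShell c h j) :
    |t - c| ≤ h * 2 ^ j := by
  cases j with
  | zero => simpa [dyadicShell] using ht
  | succ j => exact ht.2

lemma le_abs_sub_of_mem_dyadicShell_succ {c ℓ t v : ℝ} {j : ℕ}
    (hv : v ∈ dyadicShell c (3 * ℓ / 2) (j + 1)) (ht : |t - c| ≤ ℓ / 2) :
    2 ^ j * ℓ ≤ |t - v| := by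
  have hv' : 3 * ℓ / 2 * 2 ^ j < |v - c| := hv.1
  have h1 : (1 : ℝ) ≤ 2 ^ j := one_le_pow₀ one_le_two
  have hℓ : 0 ≤ ℓ := by linarith [abs_nonneg (t - c)]
  have htv := abs_sub_abs_le_abs_sub (v - c) (t - c)
  rw [show v - c - (t - c) = v - t by ring] at htv
  rw [abs_sub_comm t v]
  nlinarith

/-- With `a = 2 ^ m`, `b = 2 ^ n` and `r = 2 ^ (-θ / 2)` this is
`(a b) ^ (1 + θ / 2) ≤ a ^ θ (a² + b²)`. -/
lemma pow_mul_two_pow_mul_two_pow_le {r : ℝ} (hr : 1 / 2 ≤ r) (hr1 : r ≤ 1) (m n : ℕ) :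
    r ^ m * 2 ^ m * 2 ^ n ≤ r ^ n * ((2 ^ m) ^ 2 + (2 ^ n) ^ 2) := by
  have hr0 : 0 ≤ r := by linarith
  rcases le_total m n with hmn | hnm
  · calc r ^ m * 2 ^ m * 2 ^ n = (2 * r) ^ m * 2 ^ n := by ring
      _ ≤ (2 * r) ^ n * 2 ^ n := by gcongr; linarith
      _ = r ^ n * (2 ^ n) ^ 2 := by ring
      _ ≤ r ^ n * ((2 ^ m) ^ 2 + (2 ^ n) ^ 2) := by
          gcongr; exact le_add_of_nonneg_left (by positivity)
  · calc r ^ m * 2 ^ m * 2 ^ n ≤ r ^ n * 2 ^ m * 2 ^ m := by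
          gcongr ?_ * _ * ?_
          exacts [pow_le_pow_of_le_one hr0 hr1 hnm, pow_le_pow_right₀ one_le_two hnm]
      _ = r ^ n * (2 ^ m) ^ 2 := by ring
      _ ≤ r ^ n * ((2 ^ m) ^ 2 + (2 ^ n) ^ 2) := by
          gcongr; exact le_add_of_nonneg_right (by positivity)

lemma two_div_two_pow_sq_le {r : ℝ} (hr : 1 / 2 ≤ r) (k : ℕ) :
    2 / (2 ^ k) ^ 2 ≤ 32 * r ^ (k + 1) / 2 ^ (k + 1) := by
  rw [div_le_div_iff₀ (by positivity) (by positivity)]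
  calc 2 * 2 ^ (k + 1) = 4 * 2 ^ k * 1 := by ring
    _ ≤ 32 * r * 2 ^ k * (2 * r) ^ k := by
      gcongr ?_ * _ * ?_
      · linarith
      · exact one_le_pow₀ (by linarith)
    _ = 32 * r ^ (k + 1) * (2 ^ k) ^ 2 := by ring

lemma two_mul_sq_pow_div_two_pow_sq_le {r : ℝ} (hr : 1 / 2 ≤ r) (hr1 : r ≤ 1) (j : ℕ) :
    2 * (r ^ 2) ^ j / (2 ^ j) ^ 2 ≤ 32 * r ^ (j + 1) / 2 ^ (j + 1) := by
  rw [div_le_div_iff₀ (by positivity) (by positivity)]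
  calc 2 * (r ^ 2) ^ j * 2 ^ (j + 1) = 4 * r ^ j * 2 ^ j * r ^ j := by ring
    _ ≤ 32 * r * r ^ j * 2 ^ j * 2 ^ j := by
      gcongr ?_ * _ * _ * ?_
      · linarith
      · exact (pow_le_one₀ (by linarith) hr1).trans (one_le_pow₀ one_le_two)
    _ = 32 * r ^ (j + 1) * (2 ^ j) ^ 2 := by ring

lemma two_mul_sq_pow_div_sq_add_sq_le {r : ℝ} (hr : 1 / 2 ≤ r) (hr1 : r ≤ 1) (j k : ℕ) :
    2 * (r ^ 2) ^ j / ((2 ^ j) ^ 2 + (2 ^ k) ^ 2) ≤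
      32 * r ^ (j + 1) * r ^ (k + 1) / (2 ^ (j + 1) * 2 ^ (k + 1)) := by
  rw [div_le_div_iff₀ (by positivity) (by positivity)]
  calc 2 * (r ^ 2) ^ j * (2 ^ (j + 1) * 2 ^ (k + 1))
      = 8 * r ^ j * (r ^ j * 2 ^ j * 2 ^ k) := by ring
    _ ≤ 32 * r ^ 2 * r ^ j * (r ^ k * ((2 ^ j) ^ 2 + (2 ^ k) ^ 2)) := by
      gcongr ?_ * _ * ?_
      · nlinarith
      · exact pow_mul_two_pow_mul_two_pow_le hr hr1 j k
    _ = _ := by ring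

/-- The Hölder bound only allows steps of length at most `|t - v| / 2`, so we pass through the
midpoint of `p` and `q`. -/
lemma norm_sub_le_of_holder {g : ℝ → ℂ} {C θ S v a ℓ A p q : ℝ} (hC : 0 ≤ C) (hθ : 0 ≤ θ)
    (hS : 0 ≤ S) (hA : 0 < A) (hℓA : ℓ ≤ A)
    (hg : ∀ t t', t ≠ v → |t - t'| ≤ |t - v| / 2 →
      ‖g t - g t'‖ ≤ C * (|t - t'| / |t - v|) ^ θ / ((t - v) ^ 2 + S))
    (hfar : ∀ t, |t - a| ≤ ℓ / 2 → A ≤ |t - v|) (hp : |p - a| ≤ ℓ / 2) (hq : |q - a| ≤ ℓ / 2) :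
    ‖g p - g q‖ ≤ 2 * (C * (ℓ / A) ^ θ / (A ^ 2 + S)) := by
  have hℓ : 0 ≤ ℓ := by linarith [abs_nonneg (p - a)]
  have step : ∀ t t', |t - a| ≤ ℓ / 2 → |t - t'| ≤ ℓ / 2 →
      ‖g t - g t'‖ ≤ C * (ℓ / A) ^ θ / (A ^ 2 + S) := by
    intro t t' ht htt'
    have hAt := hfar t ht
    have htv : t ≠ v := fun h => by rw [h, sub_self, abs_zero] at hAt; linarith
    have hA2 : A ^ 2 ≤ (t - v) ^ 2 := by rw [← sq_abs (t - v)]; gcongr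
    refine (hg t t' htv (by linarith)).trans ?_
    gcongr
    linarith
  set m := (p + q) / 2
  have hm : |m - a| ≤ ℓ / 2 := by
    rw [show m - a = ((p - a) + (q - a)) / 2 by ring, abs_div, abs_two]
    linarith [abs_add_le (p - a) (q - a)]
  have hpq : |p - q| ≤ ℓ := by
    rw [show p - q = (p - a) - (q - a) by ring]
    linarith [abs_sub (p - a) (q - a)]
  have hpm : |p - m| ≤ ℓ / 2 := by
    rw [show p - m = (p - q) / 2 by ring, abs_div, abs_two]; linarith
  have hmq : |m - q| ≤ ℓ / 2 := by
    rw [show m - q = (p - q) / 2 by ring, abs_div, abs_two]; linarith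
  calc ‖g p - g q‖ ≤ ‖g p - g m‖ + ‖g m - g q‖ := norm_sub_le_norm_sub_add_norm_sub _ _ _
    _ ≤ 2 * (C * (ℓ / A) ^ θ / (A ^ 2 + S)) := by linarith [step p m hp hpm, step m q hm hmq]

lemma norm_sub_le_of_size_of_mem_dyadicShell {g : ℝ → ℂ} {C r ℓ b v w s p q : ℝ} {k : ℕ}
    (hC : 0 ≤ C) (hℓ : 0 < ℓ) (hr : 1 / 2 ≤ r)
    (hsize : ∀ t, t ≠ v → ‖g t‖ ≤ C / ((t - v) ^ 2 + (s - w) ^ 2))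
    (hw : w ∈ dyadicShell b (3 * ℓ / 2) (k + 1)) (hs : |s - b| ≤ ℓ / 2) (hpv : p ≠ v)
    (hqv : q ≠ v) :
    ‖g p - g q‖ ≤ C * (32 * r ^ (k + 1) / 2 ^ (k + 1)) / ℓ ^ 2 := by
  have hB : (2 ^ k * ℓ) ^ 2 ≤ (s - w) ^ 2 := by
    rw [← sq_abs (s - w)]; gcongr; exact le_abs_sub_of_mem_dyadicShell_succ hw hs
  have hsize' : ∀ t, t ≠ v → ‖g t‖ ≤ C * (1 / (2 ^ k) ^ 2) / ℓ ^ 2 := fun t ht =>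
    (hsize t ht).trans <| by
      rw [mul_one_div, div_div, ← mul_pow]
      gcongr
      linarith [sq_nonneg (t - v)]
  calc ‖g p - g q‖ ≤ ‖g p‖ + ‖g q‖ := norm_sub_le _ _
    _ ≤ C * (2 / (2 ^ k) ^ 2) / ℓ ^ 2 := by
      linarith [hsize' p hpv, hsize' q hqv, show C * (2 / (2 ^ k) ^ 2) / ℓ ^ 2 =
        2 * (C * (1 / (2 ^ k) ^ 2) / ℓ ^ 2) by ring]
    _ ≤ _ := by gcongr C * ?_ / _; exact two_div_two_pow_sq_le hr k

lemma norm_sub_le_of_holder_of_mem_dyadicShell {g : ℝ → ℂ} {C θ r ℓ a b v w s p q : ℝ}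
    {j k : ℕ} (hC : 0 ≤ C) (hθ : 0 ≤ θ) (hℓ : 0 < ℓ) (hr : 1 / 2 ≤ r) (hr1 : r ≤ 1)
    (hθr : (1 / 2 : ℝ) ^ θ ≤ r ^ 2)
    (hhol : ∀ t t', t ≠ v → |t - t'| ≤ |t - v| / 2 →
      ‖g t - g t'‖ ≤ C * (|t - t'| / |t - v|) ^ θ / ((t - v) ^ 2 + (s - w) ^ 2))
    (hv : v ∈ dyadicShell a (3 * ℓ / 2) (j + 1)) (hw : w ∈ dyadicShell b (3 * ℓ / 2) k)
    (hp : |p - a| ≤ ℓ / 2) (hq : |q - a| ≤ ℓ / 2) (hs : |s - b| ≤ ℓ / 2) :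
    ‖g p - g q‖ ≤ C * (32 * r ^ (j + 1) * r ^ k / (2 ^ (j + 1) * 2 ^ k)) / ℓ ^ 2 := by
  have hgain : (ℓ / (2 ^ j * ℓ)) ^ θ ≤ (r ^ 2) ^ j := by
    rw [div_mul_cancel_right₀ hℓ.ne', ← inv_pow, ← Real.rpow_pow_comm (by norm_num), ← one_div]
    gcongr
  refine (norm_sub_le_of_holder hC hθ (sq_nonneg (s - w)) (by positivity)
    (le_mul_of_one_le_left hℓ.le (one_le_pow₀ one_le_two)) hhol
    (fun t ht => le_abs_sub_of_mem_dyadicShell_succ hv ht) hp hq).trans ?_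
  rcases k with _ | k
  · simp only [pow_zero, mul_one]
    calc 2 * (C * (ℓ / (2 ^ j * ℓ)) ^ θ / ((2 ^ j * ℓ) ^ 2 + (s - w) ^ 2))
        ≤ 2 * (C * (r ^ 2) ^ j / ((2 ^ j * ℓ) ^ 2)) := by
          gcongr
          exact le_add_of_nonneg_right (sq_nonneg _)
      _ = C * (2 * (r ^ 2) ^ j / (2 ^ j) ^ 2) / ℓ ^ 2 := by ring
      _ ≤ _ := by gcongr C * ?_ / _; exact two_mul_sq_pow_div_two_pow_sq_le hr hr1 j
  · have hB : (2 ^ k * ℓ) ^ 2 ≤ (s - w) ^ 2 := by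
      rw [← sq_abs (s - w)]; gcongr; exact le_abs_sub_of_mem_dyadicShell_succ hw hs
    calc 2 * (C * (ℓ / (2 ^ j * ℓ)) ^ θ / ((2 ^ j * ℓ) ^ 2 + (s - w) ^ 2))
        ≤ 2 * (C * (r ^ 2) ^ j / ((2 ^ j * ℓ) ^ 2 + (2 ^ k * ℓ) ^ 2)) := by gcongr
      _ = C * (2 * (r ^ 2) ^ j / ((2 ^ j) ^ 2 + (2 ^ k) ^ 2)) / ℓ ^ 2 := by field_simp
      _ ≤ _ := by gcongr C * ?_ / _; exact two_mul_sq_pow_div_sq_add_sq_le hr hr1 j k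

/-- If the shell index `j` of the moving coordinate is `0`, that coordinate may be close to `v`
and only the size bound is available; the decay then comes from the other coordinate. -/
lemma norm_sub_le_of_mem_dyadicShell {g : ℝ → ℂ} {C θ r ℓ a b v w s p q : ℝ} {j k : ℕ}
    (hC : 0 ≤ C) (hθ : 0 ≤ θ) (hℓ : 0 < ℓ) (hr : 1 / 2 ≤ r) (hr1 : r ≤ 1)
    (hθr : (1 / 2 : ℝ) ^ θ ≤ r ^ 2)
    (hsize : ∀ t, t ≠ v → ‖g t‖ ≤ C / ((t - v) ^ 2 + (s - w) ^ 2))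
    (hhol : ∀ t t', t ≠ v → |t - t'| ≤ |t - v| / 2 →
      ‖g t - g t'‖ ≤ C * (|t - t'| / |t - v|) ^ θ / ((t - v) ^ 2 + (s - w) ^ 2))
    (hjk : j + k ≠ 0) (hv : v ∈ dyadicShell a (3 * ℓ / 2) j)
    (hw : w ∈ dyadicShell b (3 * ℓ / 2) k) (hp : |p - a| ≤ ℓ / 2) (hq : |q - a| ≤ ℓ / 2)
    (hs : |s - b| ≤ ℓ / 2) (hpv : p ≠ v) (hqv : q ≠ v) :
    ‖g p - g q‖ ≤ C * (32 * r ^ j * r ^ k / (2 ^ j * 2 ^ k)) / ℓ ^ 2 := by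
  rcases j with _ | j
  · obtain ⟨k, rfl⟩ := Nat.exists_eq_add_one_of_ne_zero (by omega : k ≠ 0)
    simpa using norm_sub_le_of_size_of_mem_dyadicShell hC hℓ hr hsize hw hs hpv hqv
  · exact norm_sub_le_of_holder_of_mem_dyadicShell hC hθ hℓ hr hr1 hθr hhol hv hw hp hq hs

namespace IsCZXKernel

variable {θ₁ CK : ℝ} {K : ℝ × ℝ → ℝ × ℝ → ℂ}

lemma norm_le (hK : IsCZXKernel θ₁ 1 CK K) {x y : ℝ × ℝ} (h1 : x.1 ≠ y.1) (h2 : x.2 ≠ y.2) :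
    ‖K x y‖ ≤ CK / ((x.1 - y.1) ^ 2 + (x.2 - y.2) ^ 2) := by
  have ha : 0 < |x.1 - y.1| := abs_pos.2 (sub_ne_zero.2 h1)
  have hb : 0 < |x.2 - y.2| := abs_pos.2 (sub_ne_zero.2 h2)
  refine (hK.size x y h1 h2).trans_eq ?_
  rw [dfac_one h1 h2]
  field_simp

lemma norm_sub_le_fst (hK : IsCZXKernel θ₁ 1 CK K) {x y : ℝ × ℝ} {w : ℝ}
    (h1 : x.1 ≠ y.1) (h2 : x.2 ≠ y.2) (hw : |x.1 - w| ≤ |x.1 - y.1| / 2) :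
    ‖K x y - K (w, x.2) y‖ ≤
      CK * (|x.1 - w| / |x.1 - y.1|) ^ θ₁ / ((x.1 - y.1) ^ 2 + (x.2 - y.2) ^ 2) := by
  have ha : 0 < |x.1 - y.1| := abs_pos.2 (sub_ne_zero.2 h1)
  have hb : 0 < |x.2 - y.2| := abs_pos.2 (sub_ne_zero.2 h2)
  refine (hK.holder_x1 x y w h1 h2 hw).trans_eq ?_
  rw [dfac_one h1 h2, Real.rpow_add ha, Real.rpow_one, Real.div_rpow (abs_nonneg _) ha.le]
  have := Real.rpow_pos_of_pos ha θ₁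
  field_simp

lemma norm_sub_le_snd (hK : IsCZXKernel θ₁ 1 CK K) {x y : ℝ × ℝ} {w : ℝ}
    (h1 : x.1 ≠ y.1) (h2 : x.2 ≠ y.2) (hw : |x.2 - w| ≤ |x.2 - y.2| / 2) :
    ‖K x y - K (x.1, w) y‖ ≤
      CK * (|x.2 - w| / |x.2 - y.2|) ^ θ₁ / ((x.2 - y.2) ^ 2 + (x.1 - y.1) ^ 2) := by
  have ha : 0 < |x.1 - y.1| := abs_pos.2 (sub_ne_zero.2 h1)
  have hb : 0 < |x.2 - y.2| := abs_pos.2 (sub_ne_zero.2 h2)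
  refine (hK.holder_x2 x y w h1 h2 hw).trans_eq ?_
  rw [dfac_one h1 h2, Real.rpow_add hb, Real.rpow_one, Real.div_rpow (abs_nonneg _) hb.le]
  have := Real.rpow_pos_of_pos hb θ₁
  field_simp
  ring

lemma norm_sub_le_of_mem_dyadicShell (hK : IsCZXKernel θ₁ 1 CK K) (hCK : 0 ≤ CK)
    (hθ : 0 ≤ θ₁) {r : ℝ} (hr : 1 / 2 ≤ r) (hr1 : r ≤ 1) (hθr : (1 / 2 : ℝ) ^ θ₁ ≤ r ^ 2)
    {c y z u : ℝ × ℝ} {ℓ : ℝ} (hℓ : 0 < ℓ) (hy : y ∈ sqr c ℓ) (hz : z ∈ sqr c ℓ) {j k : ℕ}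
    (hu₁ : u.1 ∈ dyadicShell c.1 (3 * ℓ / 2) j) (hu₂ : u.2 ∈ dyadicShell c.2 (3 * ℓ / 2) k)
    (hu : u ∉ sqr c (3 * ℓ)) (hy₁ : y.1 ≠ u.1) (hz₁ : z.1 ≠ u.1) (hy₂ : y.2 ≠ u.2)
    (hz₂ : z.2 ≠ u.2) :
    ‖K y u - K z u‖ ≤ CK * (64 * r ^ j * r ^ k / (2 ^ j * 2 ^ k)) / ℓ ^ 2 := by
  rw [mem_sqr_iff] at hy hz
  have hjk : j + k ≠ 0 := by
    intro h
    obtain ⟨rfl, rfl⟩ : j = 0 ∧ k = 0 := by omega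
    refine hu (mem_sqr_iff.2 ⟨?_, ?_⟩)
    · linarith [abs_sub_le_of_mem_dyadicShell hu₁]
    · linarith [abs_sub_le_of_mem_dyadicShell hu₂]
  have hfst : ‖K (y.1, y.2) u - K (z.1, y.2) u‖ ≤
      CK * (32 * r ^ j * r ^ k / (2 ^ j * 2 ^ k)) / ℓ ^ 2 :=
    _root_.norm_sub_le_of_mem_dyadicShell (g := fun t => K (t, y.2) u) hCK hθ hℓ hr hr1 hθr
      (fun t ht => hK.norm_le ht hy₂) (fun t t' ht htt' => hK.norm_sub_le_fst ht hy₂ htt')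
      hjk hu₁ hu₂ hy.1 hz.1 hy.2 hy₁ hz₁
  have hsnd : ‖K (z.1, y.2) u - K (z.1, z.2) u‖ ≤
      CK * (32 * r ^ k * r ^ j / (2 ^ k * 2 ^ j)) / ℓ ^ 2 :=
    _root_.norm_sub_le_of_mem_dyadicShell (g := fun t => K (z.1, t) u) hCK hθ hℓ hr hr1 hθr
      (fun t ht => (hK.norm_le (x := (z.1, t)) hz₁ ht).trans_eq (by rw [add_comm]))
      (fun t t' ht htt' => hK.norm_sub_le_snd (x := (z.1, t)) hz₁ ht htt')
      (by omega) hu₂ hu₁ hy.2 hz.2 hz.1 hy₂ hz₂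
  calc ‖K y u - K z u‖
      ≤ ‖K (y.1, y.2) u - K (z.1, y.2) u‖ + ‖K (z.1, y.2) u - K (z.1, z.2) u‖ :=
        norm_sub_le_norm_sub_add_norm_sub _ _ _
    _ ≤ CK * (64 * r ^ j * r ^ k / (2 ^ j * 2 ^ k)) / ℓ ^ 2 := by
        rw [show CK * (64 * r ^ j * r ^ k / (2 ^ j * 2 ^ k)) / ℓ ^ 2 =
          CK * (32 * r ^ j * r ^ k / (2 ^ j * 2 ^ k)) / ℓ ^ 2 +
            CK * (32 * r ^ k * r ^ j / (2 ^ k * 2 ^ j)) / ℓ ^ 2 by ring]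
        exact add_le_add hfst hsnd

lemma integrableOn_compl_sqr (hK : IsCZXKernel θ₁ 1 CK K) (hCK : 0 ≤ CK) {c y : ℝ × ℝ}
    {ℓ : ℝ} (hℓ : 0 < ℓ) (hy : y ∈ sqr c ℓ) {f : ℝ × ℝ → ℂ} (hf : Integrable f) :
    IntegrableOn (fun u => K y u * f u) (sqr c (3 * ℓ))ᶜ := by
  have hmeas : MeasurableSet (sqr c (3 * ℓ))ᶜ :=
    (measurableSet_Icc.prod measurableSet_Icc).compl
  refine Integrable.mono' (hf.norm.const_mul (CK / ℓ ^ 2)).restrict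
    ((hK.meas.comp (measurable_const.prodMk measurable_id)).aestronglyMeasurable.mul
      hf.aestronglyMeasurable.restrict) ?_
  filter_upwards [ae_restrict_of_ae (ae_fst_ne y.1), ae_restrict_of_ae (ae_snd_ne_s15 y.2),
    ae_restrict_mem hmeas] with u hu₁ hu₂ hu
  rw [mem_sqr_iff] at hy
  have hfar : ℓ ^ 2 ≤ (y.1 - u.1) ^ 2 + (y.2 - u.2) ^ 2 := by
    have h₁ := abs_sub_abs_le_abs_sub (u.1 - c.1) (y.1 - c.1)
    have h₂ := abs_sub_abs_le_abs_sub (u.2 - c.2) (y.2 - c.2)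
    rw [show u.1 - c.1 - (y.1 - c.1) = -(y.1 - u.1) by ring, abs_neg] at h₁
    rw [show u.2 - c.2 - (y.2 - c.2) = -(y.2 - u.2) by ring, abs_neg] at h₂
    rcases not_and_or.1 (mt mem_sqr_iff.2 hu) with h | h
    · nlinarith [sq_abs (y.1 - u.1), sq_nonneg (y.2 - u.2)]
    · nlinarith [sq_abs (y.2 - u.2), sq_nonneg (y.1 - u.1)]
  rw [norm_mul]
  gcongr
  exact (hK.norm_le (Ne.symm hu₁) (Ne.symm hu₂)).trans (by gcongr)

lemma lintegral_dyadicShell_le (hK : IsCZXKernel θ₁ 1 CK K) (hCK : 0 ≤ CK) (hθ : 0 ≤ θ₁)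
    {r : ℝ} (hr : 1 / 2 ≤ r) (hr1 : r ≤ 1) (hθr : (1 / 2 : ℝ) ^ θ₁ ≤ r ^ 2)
    {f : ℝ × ℝ → ℂ} (hf : Measurable f) {c x y z : ℝ × ℝ} {ℓ : ℝ} (hℓ : 0 < ℓ)
    (hx : x ∈ sqr c ℓ) (hy : y ∈ sqr c ℓ) (hz : z ∈ sqr c ℓ) (j k : ℕ) :
    ∫⁻ u in (dyadicShell c.1 (3 * ℓ / 2) j ×ˢ dyadicShell c.2 (3 * ℓ / 2) k) ∩ (sqr c (3 * ℓ))ᶜ,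
        ‖K y u * f u - K z u * f u‖ₑ ≤
      ENNReal.ofReal (576 * CK * (r ^ j * r ^ k)) * strongMax f x := by
  have hr₀ : 0 ≤ r := by linarith
  have hj : (1 : ℝ) ≤ 2 ^ j := one_le_pow₀ one_le_two
  have hk : (1 : ℝ) ≤ 2 ^ k := one_le_pow₀ one_le_two
  rw [mem_sqr_iff] at hx
  have hx' : x ∈ rect c (3 * ℓ * 2 ^ j) (3 * ℓ * 2 ^ k) :=
    mem_rect_iff.2 ⟨by nlinarith, by nlinarith⟩
  calc _ ≤ ENNReal.ofReal (CK * (64 * r ^ j * r ^ k / (2 ^ j * 2 ^ k)) / ℓ ^ 2 *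
        (3 * ℓ * 2 ^ j) * (3 * ℓ * 2 ^ k)) * strongMax f x := by
        refine setLIntegral_le_strongMax hf (by positivity) (by positivity) (by positivity)
          ?_ hx' ?_
        · rintro u ⟨⟨hu₁, hu₂⟩, -⟩
          refine mem_rect_iff.2 ⟨?_, ?_⟩
          · linarith [abs_sub_le_of_mem_dyadicShell hu₁]
          · linarith [abs_sub_le_of_mem_dyadicShell hu₂]
        filter_upwards [ae_fst_ne y.1, ae_fst_ne z.1, ae_snd_ne_s15 y.2, ae_snd_ne_s15 z.2]
          with u hy₁ hz₁ hy₂ hz₂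
        rintro ⟨⟨hu₁, hu₂⟩, hu⟩
        rw [← sub_mul, norm_mul]
        gcongr
        exact hK.norm_sub_le_of_mem_dyadicShell hCK hθ hr hr1 hθr hℓ hy hz hu₁ hu₂ hu
          (Ne.symm hy₁) (Ne.symm hz₁) (Ne.symm hy₂) (Ne.symm hz₂)
    _ = ENNReal.ofReal (576 * CK * (r ^ j * r ^ k)) * strongMax f x := by
        congr 2
        field_simp
        ring

end IsCZXKernel

/-- Lemma 6.3.  For a CZX kernel with `θ₂ = 1`, the grand maximal
truncation is controlled by the strong maximal function: for every square `J`, every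
bounded compactly supported `f` vanishing on `3J` and all `x, y, z ∈ J`, the truncated
integrals converge absolutely and their difference is at most `C·M_*f(x)`. -/
theorem statement15 (θ₁ : ℝ) (hθ₁ : θ₁ ∈ Ioc (0:ℝ) 1) (CK : ℝ) (hCK : 0 < CK) :
    ∃ C : ℝ, 0 < C ∧ ∀ K : ℝ × ℝ → ℝ × ℝ → ℂ, IsCZXKernel θ₁ 1 CK K →
      ∀ (c : ℝ × ℝ) (ℓ : ℝ), 0 < ℓ →
      ∀ f : ℝ × ℝ → ℂ, Measurable f → (∃ M, ∀ x, ‖f x‖ ≤ M) → HasCompactSupport f →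
        (∀ u ∈ sqr c (3 * ℓ), f u = 0) →
      ∀ x ∈ sqr c ℓ, ∀ y ∈ sqr c ℓ, ∀ z ∈ sqr c ℓ,
        IntegrableOn (fun u => K y u * f u) (sqr c (3 * ℓ))ᶜ volume ∧
        IntegrableOn (fun u => K z u * f u) (sqr c (3 * ℓ))ᶜ volume ∧
        ENNReal.ofReal
            ‖(∫ u in (sqr c (3 * ℓ))ᶜ, K y u * f u) - ∫ u in (sqr c (3 * ℓ))ᶜ, K z u * f u‖ ≤
          ENNReal.ofReal C * strongMax f x := by
  obtain ⟨hr, hr1⟩ := one_half_rpow_half_mem_Ico hθ₁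
  have hθr := (sq_one_half_rpow_half θ₁).ge
  set r : ℝ := (1 / 2 : ℝ) ^ (θ₁ / 2)
  refine ⟨576 * CK * (1 - r)⁻¹ ^ 2, by have := sub_pos.2 hr1; positivity, ?_⟩
  intro K hK c ℓ hℓ f hf ⟨M, hM⟩ hcs _ x hx y hy z hz
  have hfi : Integrable f :=
    memLp_one_iff_integrable.1 (hcs.memLp_of_bound hf.aestronglyMeasurable M (ae_of_all _ hM))
  have hIy := hK.integrableOn_compl_sqr hCK.le hℓ hy hfi
  have hIz := hK.integrableOn_compl_sqr hCK.le hℓ hz hfi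
  refine ⟨hIy, hIz, ?_⟩
  have hcover : (sqr c (3 * ℓ))ᶜ ⊆ ⋃ p : ℕ × ℕ,
      (dyadicShell c.1 (3 * ℓ / 2) p.1 ×ˢ dyadicShell c.2 (3 * ℓ / 2) p.2) ∩ (sqr c (3 * ℓ))ᶜ := by
    rw [← iUnion_inter, iUnion_dyadicShell_prod c (by positivity), univ_inter]
  rw [← integral_sub hIy hIz, ofReal_norm]
  calc _ ≤ ∫⁻ u in (sqr c (3 * ℓ))ᶜ, ‖K y u * f u - K z u * f u‖ₑ :=
        enorm_integral_le_lintegral_enorm _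
    _ ≤ ∑' p : ℕ × ℕ, ENNReal.ofReal (576 * CK * (r ^ p.1 * r ^ p.2)) * strongMax f x :=
        (lintegral_mono_set hcover).trans <| (lintegral_iUnion_le _ _).trans <|
          ENNReal.tsum_le_tsum fun p => hK.lintegral_dyadicShell_le hCK.le hθ₁.1.le hr hr1.le hθr
            hf hℓ hx hy hz p.1 p.2
    _ = ENNReal.ofReal (576 * CK * (1 - r)⁻¹ ^ 2) * strongMax f x := by
        rw [ENNReal.tsum_mul_right, tsum_ofReal_mul_pow_mul_pow (by linarith) hr1 (by positivity)]
end
end
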